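/- Let A be an n×n matrix over ℝ≥0, λ ∈ ℝ≥0, and x ∈ ℝ≥0^n with A⊗x = λ·x. Suppose j is an index for which there exists l with a_{lj}·x_j = λ·x_l ≠ 0. Then: (i) (x_k : [0,∞]) ≤ γ*_k(A,λ·x) for every k; (ii) γ*_j(A,λ·x) = (x_j : [0,∞]) and M_j(A,λ·x) = {i : a_{ij}·x_j = λ·x_i ≠ 0}; (iii) for every i such that (i,j) is an edge of crit(A,λ), one has i ∈ M_j(A,λ·x). -/

import Mathlib

open scoped NNReal ENNReal

noncomputable section

namespace MaxAlg

/-- Max-algebraic matrix–vector product over ℝ≥0: (A⊗x)_i = max_j a_{ij}·x_j. -/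
def mulVec {m n : ℕ} (A : Matrix (Fin m) (Fin n) ℝ≥0) (x : Fin n → ℝ≥0) :
    Fin m → ℝ≥0 :=
  fun i => Finset.univ.sup fun j => A i j * x j

/-- Support of a vector. -/
def supp {m : ℕ} (x : Fin m → ℝ≥0) : Set (Fin m) := {i | x i ≠ 0}

/-- Eigencone V(A,λ) = {x : A⊗x = λ·x}. -/
def eigencone {n : ℕ} (A : Matrix (Fin n) (Fin n) ℝ≥0) (lam : ℝ≥0) :
    Set (Fin n → ℝ≥0) :=
  {x | mulVec A x = fun i => lam * x i}

/-- A cycle of length `k ≥ 1` is encoded as `σ : ℕ → Fin n` with `σ k = σ 0`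
(standing for a function on ℤ/kℤ). -/
def IsCycle {n : ℕ} (k : ℕ) (σ : ℕ → Fin n) : Prop := 1 ≤ k ∧ σ k = σ 0

/-- The cycle lies in a set S: all its values belong to S. -/
def LiesIn {n : ℕ} (k : ℕ) (σ : ℕ → Fin n) (S : Set (Fin n)) : Prop :=
  ∀ t < k, σ t ∈ S

/-- Weight of a cycle in A: ∏_t a_{σ(t),σ(t+1)}. -/
def cycleWeight {n : ℕ} (A : Matrix (Fin n) (Fin n) ℝ≥0) (k : ℕ) (σ : ℕ → Fin n) : ℝ≥0 :=
  ∏ t ∈ Finset.range k, A (σ t) (σ (t + 1))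

/-- γ*_j(A,b): the greatest α ∈ [0,∞] with α·a_{ij} ≤ b_i for all i
(conventions 0·∞ = ∞·0 = 0 are built into ℝ≥0∞ multiplication). -/
def gammaStar {m n : ℕ} (A : Matrix (Fin m) (Fin n) ℝ≥0) (b : Fin m → ℝ≥0) (j : Fin n) :
    ℝ≥0∞ :=
  sSup {α : ℝ≥0∞ | ∀ i, α * (A i j : ℝ≥0∞) ≤ (b i : ℝ≥0∞)}

/-- M_j(A,b) = {i : a_{ij}·γ*_j(A,b) = b_i ≠ 0}. -/
def Mset {m n : ℕ} (A : Matrix (Fin m) (Fin n) ℝ≥0) (b : Fin m → ℝ≥0) (j : Fin n) :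
    Set (Fin m) :=
  {i | (A i j : ℝ≥0∞) * gammaStar A b j = (b i : ℝ≥0∞) ∧ b i ≠ 0}

/-- Max-algebraic column span of A. -/
def span {m n : ℕ} (A : Matrix (Fin m) (Fin n) ℝ≥0) : Set (Fin m → ℝ≥0) :=
  {y | ∃ c : Fin n → ℝ≥0, ∀ r, y r = Finset.univ.sup fun j => A r j * c j}

/-- Max-algebraic column span of A with its i-th column removed. -/
def spanMinus {m n : ℕ} (A : Matrix (Fin m) (Fin n) ℝ≥0) (i : Fin n) :
    Set (Fin m → ℝ≥0) :=
  {y | ∃ c : Fin n → ℝ≥0, ∀ r, y r = (Finset.univ.erase i).sup fun j => A r j * c j}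

/-- N^λ(A) = {i : ∃ x ∈ V(A,λ), x_i > 0}. -/
def Nlam {n : ℕ} (A : Matrix (Fin n) (Fin n) ℝ≥0) (lam : ℝ≥0) : Set (Fin n) :=
  {i | ∃ x ∈ eigencone A lam, 0 < x i}

/-- (i,j) is an edge of crit(A,λ). -/
def CritEdge {n : ℕ} (A : Matrix (Fin n) (Fin n) ℝ≥0) (lam : ℝ≥0) (i j : Fin n) : Prop :=
  ∃ k σ, IsCycle k σ ∧ LiesIn k σ (Nlam A lam) ∧ cycleWeight A k σ = lam ^ k ∧
    ∃ t < k, σ t = i ∧ σ (t + 1) = j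

/-- i is a critical node: some cycle lying in N^λ(A) with weight λ^k passes through i. -/
def CritNode {n : ℕ} (A : Matrix (Fin n) (Fin n) ℝ≥0) (lam : ℝ≥0) (i : Fin n) : Prop :=
  ∃ k σ, IsCycle k σ ∧ LiesIn k σ (Nlam A lam) ∧ cycleWeight A k σ = lam ^ k ∧
    ∃ t < k, σ t = i

/-- (i,j) is an edge of crit(A,x,λ). -/
def CritEdgeOn {n : ℕ} (A : Matrix (Fin n) (Fin n) ℝ≥0) (lam : ℝ≥0) (x : Fin n → ℝ≥0)
    (i j : Fin n) : Prop :=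
  ∃ k σ, IsCycle k σ ∧ LiesIn k σ (supp x) ∧ cycleWeight A k σ = lam ^ k ∧
    ∃ t < k, σ t = i ∧ σ (t + 1) = j

/-- x is a simple image eigenvector of A associated with λ. -/
def SimpleImageEig {n : ℕ} (A : Matrix (Fin n) (Fin n) ℝ≥0) (lam : ℝ≥0)
    (x : Fin n → ℝ≥0) : Prop :=
  x ∈ eigencone A lam ∧
    ∀ y : Fin n → ℝ≥0, mulVec A y = (fun i => lam * x i) → y = x

/-- The box (interval) determined by component intervals X_j. -/
def box {n : ℕ} (X : Fin n → Set ℝ≥0) : Set (Fin n → ℝ≥0) := {x | ∀ j, x j ∈ X j}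

/-- Each component set is a nonempty order-convex interval of ℝ≥0. -/
def IsInterval {n : ℕ} (X : Fin n → Set ℝ≥0) : Prop :=
  ∀ j, (X j).Nonempty ∧ (X j).OrdConnected

/-- A has X-simple image eigencone associated with λ. -/
def XSimple {n : ℕ} (A : Matrix (Fin n) (Fin n) ℝ≥0) (lam : ℝ≥0)
    (X : Fin n → Set ℝ≥0) : Prop :=
  ∀ x ∈ eigencone A lam ∩ box X,
    ∀ y ∈ box X, mulVec A y = (fun i => lam * x i) → y = x

/-! Since `A ⊗ x ≤ λ x`, every `x_k` is feasible for `γ*_k(A, λx)`, and a row `l` in which column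
`j` is tight forces `γ*_j ≤ x_j`. Along a critical cycle the inequalities
`a_{σ(t)σ(t+1)} x_{σ(t+1)} ≤ λ x_{σ(t)}` multiply to an equality, because the weights multiply to
`λ^k` and the two products of the `x_{σ(t)}` agree cyclically; as `x` is positive along the whole
cycle once it is positive at `j`, each of them is tight. -/

def IsSubeigenvector {n : ℕ} (A : Matrix (Fin n) (Fin n) ℝ≥0) (lam : ℝ≥0) (x : Fin n → ℝ≥0) :
    Prop :=
  ∀ i j, A i j * x j ≤ lam * x i

theorem mul_le_mulVec {m n : ℕ} (A : Matrix (Fin m) (Fin n) ℝ≥0) (x : Fin n → ℝ≥0)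
    (i : Fin m) (j : Fin n) : A i j * x j ≤ mulVec A x i :=
  Finset.le_sup (f := fun j => A i j * x j) (Finset.mem_univ j)

theorem isSubeigenvector_of_mulVec_eq {n : ℕ} {A : Matrix (Fin n) (Fin n) ℝ≥0} {lam : ℝ≥0}
    {x : Fin n → ℝ≥0} (h : mulVec A x = fun i => lam * x i) : IsSubeigenvector A lam x :=
  fun i j => (mul_le_mulVec A x i j).trans_eq (congrFun h i)

section gammaStar

variable {m n : ℕ} {A : Matrix (Fin m) (Fin n) ℝ≥0} {b : Fin m → ℝ≥0} {j : Fin n}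

theorem gammaStar_mul_le (i : Fin m) : gammaStar A b j * A i j ≤ b i := by
  rw [gammaStar, ENNReal.sSup_mul]
  exact iSup₂_le fun α hα => hα i

theorem le_gammaStar_iff {α : ℝ≥0∞} : α ≤ gammaStar A b j ↔ ∀ i, α * A i j ≤ b i :=
  ⟨fun h i => (mul_le_mul_left h _).trans (gammaStar_mul_le i), fun h => le_sSup h⟩

theorem gammaStar_le_of_mul_eq {l : Fin m} {c : ℝ≥0} (hA : A l j ≠ 0) (h : A l j * c = b l) :
    gammaStar A b j ≤ c := by
  have hle : gammaStar A b j * A l j ≤ c * A l j := by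
    rw [mul_comm (c : ℝ≥0∞), ← ENNReal.coe_mul, h]
    exact gammaStar_mul_le l
  exact (ENNReal.mul_le_mul_iff_left (by exact_mod_cast hA) ENNReal.coe_ne_top).mp hle

theorem Mset_eq_of_gammaStar_eq {c : ℝ≥0} (h : gammaStar A b j = c) :
    Mset A b j = {i | A i j * c = b i ∧ b i ≠ 0} := by
  ext i
  simp only [Mset, Set.mem_ofPred_eq, h, ← ENNReal.coe_mul, ENNReal.coe_inj]

end gammaStar

theorem IsSubeigenvector.coe_le_gammaStar {n : ℕ} {A : Matrix (Fin n) (Fin n) ℝ≥0} {lam : ℝ≥0}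
    {x : Fin n → ℝ≥0} (hx : IsSubeigenvector A lam x) (k : Fin n) :
    (x k : ℝ≥0∞) ≤ gammaStar A (fun i => lam * x i) k :=
  le_gammaStar_iff.2 fun i => by rw [mul_comm]; exact_mod_cast hx i k

section cycle

variable {n : ℕ} {A : Matrix (Fin n) (Fin n) ℝ≥0} {lam : ℝ≥0} {x : Fin n → ℝ≥0}
  {k : ℕ} {σ : ℕ → Fin n}

theorem IsCycle.prod_comp_succ {M : Type*} [CommMonoid M] (hσ : IsCycle k σ) (f : Fin n → M) :
    ∏ t ∈ Finset.range k, f (σ (t + 1)) = ∏ t ∈ Finset.range k, f (σ t) := by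
  obtain ⟨hk, hσk⟩ := hσ
  obtain ⟨m, rfl⟩ := Nat.exists_eq_add_of_le' hk
  rw [Finset.prod_range_succ, hσk, Finset.prod_range_succ']

theorem apply_ne_zero_of_cycleWeight_ne_zero (h : cycleWeight A k σ ≠ 0) {t : ℕ} (ht : t < k) :
    A (σ t) (σ (t + 1)) ≠ 0 :=
  Finset.prod_ne_zero_iff.mp h t (Finset.mem_range.2 ht)

theorem IsSubeigenvector.ne_zero_of_apply_ne_zero (hx : IsSubeigenvector A lam x) {i j : Fin n}
    (hA : A i j ≠ 0) (hxj : x j ≠ 0) : x i ≠ 0 := by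
  intro hxi
  have := hx i j
  rw [hxi, mul_zero, nonpos_iff_eq_zero] at this
  exact mul_ne_zero hA hxj this

theorem IsSubeigenvector.ne_zero_on_cycle (hx : IsSubeigenvector A lam x) (hσ : IsCycle k σ)
    (hw : cycleWeight A k σ ≠ 0) {t : ℕ} (ht : t ≤ k) (hxt : x (σ t) ≠ 0) :
    ∀ s ≤ k, x (σ s) ≠ 0 := by
  have back : ∀ s ≤ k, x (σ s) ≠ 0 → ∀ r ≤ s, x (σ r) ≠ 0 := fun s hs hxs r hr =>
    Nat.decreasingInduction (motive := fun r _ => x (σ r) ≠ 0)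
      (fun r hr hxr => hx.ne_zero_of_apply_ne_zero
        (apply_ne_zero_of_cycleWeight_ne_zero hw (hr.trans_le hs)) hxr) hxs hr
  have hxk : x (σ k) ≠ 0 := hσ.2 ▸ back t ht hxt 0 t.zero_le
  exact back k le_rfl hxk

theorem IsSubeigenvector.mul_eq_on_cycle (hx : IsSubeigenvector A lam x) (hσ : IsCycle k σ)
    (hw : cycleWeight A k σ = lam ^ k) (hlam : lam ≠ 0) (hpos : ∀ s ≤ k, x (σ s) ≠ 0)
    {t : ℕ} (ht : t < k) : A (σ t) (σ (t + 1)) * x (σ (t + 1)) = lam * x (σ t) := by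
  have hw0 : cycleWeight A k σ ≠ 0 := hw ▸ pow_ne_zero k hlam
  have hprod : ∏ s ∈ Finset.range k, A (σ s) (σ (s + 1)) * x (σ (s + 1)) =
      ∏ s ∈ Finset.range k, lam * x (σ s) := by
    rw [Finset.prod_mul_distrib, Finset.prod_mul_distrib, ← cycleWeight, hw, hσ.prod_comp_succ,
      Finset.prod_const, Finset.card_range]
  by_contra hne
  refine hprod.not_lt (Finset.prod_lt_prod (fun s hs => ?_) (fun s _ => hx _ _)
    ⟨t, Finset.mem_range.2 ht, (hx _ _).lt_of_ne hne⟩)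
  have hs := Finset.mem_range.1 hs
  exact pos_iff_ne_zero.2 (mul_ne_zero (apply_ne_zero_of_cycleWeight_ne_zero hw0 hs) (hpos _ hs))

theorem CritEdge.mul_eq_of_isSubeigenvector (hx : IsSubeigenvector A lam x) (hlam : lam ≠ 0)
    {i j : Fin n} (hij : CritEdge A lam i j) (hxj : x j ≠ 0) :
    A i j * x j = lam * x i ∧ x i ≠ 0 := by
  obtain ⟨k, σ, hσ, -, hw, t, ht, rfl, rfl⟩ := hij
  have hpos := hx.ne_zero_on_cycle hσ (hw ▸ pow_ne_zero k hlam) ht hxj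
  exact ⟨hx.mul_eq_on_cycle hσ hw hlam hpos ht, hpos t ht.le⟩

end cycle

/-- properties of γ* and M_j for systems with an eigenvector
on the right-hand side. -/
theorem stmt7 {n : ℕ} (A : Matrix (Fin n) (Fin n) ℝ≥0) (lam : ℝ≥0)
    (x : Fin n → ℝ≥0) (hev : mulVec A x = fun i => lam * x i)
    (j l : Fin n) (hl : A l j * x j = lam * x l) (hl0 : lam * x l ≠ 0) :
    (∀ k : Fin n, (x k : ℝ≥0∞) ≤ gammaStar A (fun i => lam * x i) k) ∧
    (gammaStar A (fun i => lam * x i) j = (x j : ℝ≥0∞) ∧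
      Mset A (fun i => lam * x i) j =
        {i : Fin n | A i j * x j = lam * x i ∧ lam * x i ≠ 0}) ∧
    (∀ i : Fin n, CritEdge A lam i j → i ∈ Mset A (fun i' => lam * x i') j) := by
  have hx := isSubeigenvector_of_mulVec_eq hev
  have hlam : lam ≠ 0 := left_ne_zero_of_mul hl0
  obtain ⟨hAlj, hxj⟩ := mul_ne_zero_iff.1 (hl ▸ hl0)
  have hγ : gammaStar A (fun i => lam * x i) j = x j :=
    le_antisymm (gammaStar_le_of_mul_eq hAlj hl) (hx.coe_le_gammaStar j)
  have hM := Mset_eq_of_gammaStar_eq hγ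
  refine ⟨hx.coe_le_gammaStar, ⟨hγ, hM⟩, fun i hij => ?_⟩
  obtain ⟨heq, hxi⟩ := hij.mul_eq_of_isSubeigenvector hx hlam hxj
  exact hM ▸ ⟨heq, mul_ne_zero hlam hxi⟩

end MaxAlg

end
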